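/- Let d ≤ n/3 and let V, W be a partition of an n-element vertex set with |W| = d. Then the hypergraph H_{n,d}(V,W) contains a matching of size d, and its minimum vertex degree satisfies δ₁(H_{n,d}(V,W)) = C(n-1,2) − C(n-d-1,2) (where C(a,b) denotes the binomial coefficient). -/
import Mathlib


open Finset

lemma matching_aux {Vt : Type} [DecidableEq Vt] :
    ∀ k : ℕ, ∀ (W V : Finset Vt), W.card = k → Disjoint V W → 2 * k ≤ V.card →
    ∃ M : Finset (Finset Vt), M.card = k ∧ (M : Set (Finset Vt)).PairwiseDisjoint id ∧
      ∀ e ∈ M, ∃ w ∈ W, ∃ v1 ∈ V, ∃ v2 ∈ V, v1 ≠ v2 ∧ e = {w, v1, v2} := by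
  intro k
  induction k with
  | zero =>
    intro W V _ _ _
    exact ⟨∅, by simp, by simp, by simp⟩
  | succ k ih =>
    intro W V hWk hdisj hV
    obtain ⟨w, hw⟩ := Finset.card_pos.mp (by omega : 0 < W.card)
    obtain ⟨v1, hv1, v2, hv2, hne⟩ := Finset.one_lt_card.mp (by omega : 1 < V.card)
    have hsub : ({v1, v2} : Finset Vt) ⊆ V := by
      intro x hx; simp at hx; rcases hx with rfl | rfl <;> assumption
    have hcard2 : ({v1, v2} : Finset Vt).card = 2 := by
      rw [Finset.card_insert_of_notMem (by simp [hne]), Finset.card_singleton]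
    have hVsd : (V \ {v1, v2}).card = V.card - 2 := by
      rw [Finset.card_sdiff_of_subset hsub, hcard2]
    obtain ⟨M, hMcard, hMdisj, hMe⟩ := ih (W.erase w) (V \ {v1, v2})
      (by rw [Finset.card_erase_of_mem hw, hWk]; rfl)
      (Finset.disjoint_of_subset_left (Finset.sdiff_subset)
        (Finset.disjoint_of_subset_right (Finset.erase_subset _ _) hdisj))
      (by omega)
    have hwV : w ∉ V := fun h => Finset.disjoint_left.mp hdisj h hw
    have hnewnotmem : ({w, v1, v2} : Finset Vt) ∉ M := by
      intro hmem
      obtain ⟨w', hw', u1, hu1, u2, hu2, _, he⟩ := hMe _ hmem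
      have : w ∈ ({w', u1, u2} : Finset Vt) := by rw [← he]; simp
      simp only [Finset.mem_insert, Finset.mem_singleton] at this
      rcases this with rfl | rfl | rfl
      · exact (Finset.mem_erase.mp hw').1 rfl
      · exact hwV (Finset.mem_sdiff.mp hu1).1
      · exact hwV (Finset.mem_sdiff.mp hu2).1
    have hdisjnew : ∀ e ∈ M, Disjoint ({w, v1, v2} : Finset Vt) e := by
      intro e he
      obtain ⟨w', hw', u1, hu1, u2, hu2, _, rfl⟩ := hMe _ he
      rw [Finset.disjoint_left]
      intro x hx hx'
      simp only [Finset.mem_insert, Finset.mem_singleton] at hx hx'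
      have hw'W : w' ∈ W := Finset.mem_of_mem_erase hw'
      have hu1V : u1 ∈ V := (Finset.mem_sdiff.mp hu1).1
      have hu2V : u2 ∈ V := (Finset.mem_sdiff.mp hu2).1
      have hu1ne : u1 ∉ ({v1, v2} : Finset Vt) := (Finset.mem_sdiff.mp hu1).2
      have hu2ne : u2 ∉ ({v1, v2} : Finset Vt) := (Finset.mem_sdiff.mp hu2).2
      simp only [Finset.mem_insert, Finset.mem_singleton, not_or] at hu1ne hu2ne
      rcases hx with rfl | rfl | rfl <;> rcases hx' with rfl | rfl | rfl
      · exact (Finset.mem_erase.mp hw').1 rfl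
      · exact hwV hu1V
      · exact hwV hu2V
      · exact Finset.disjoint_left.mp hdisj hv1 hw'W
      · exact hu1ne.1 rfl
      · exact hu2ne.1 rfl
      · exact Finset.disjoint_left.mp hdisj hv2 hw'W
      · exact hu1ne.2 rfl
      · exact hu2ne.2 rfl
    refine ⟨insert {w, v1, v2} M, ?_, ?_, ?_⟩
    · rw [Finset.card_insert_of_notMem hnewnotmem, hMcard]
    · rw [Finset.coe_insert]
      exact hMdisj.insert (fun e he _ => hdisjnew e he)
    · intro e he
      rcases Finset.mem_insert.mp he with rfl | he'
      · exact ⟨w, hw, v1, hv1, v2, hv2, hne, rfl⟩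
      · obtain ⟨w', hw', u1, hu1, u2, hu2, hne', rfl⟩ := hMe _ he'
        exact ⟨w', Finset.mem_of_mem_erase hw', u1, (Finset.mem_sdiff.mp hu1).1,
          u2, (Finset.mem_sdiff.mp hu2).1, hne', rfl⟩

/-- Let `d ≤ n/3` and let `V, W` partition an `n`-element vertex set with
`|W| = d`. The hypergraph `H_{n,d}(V,W)` (all 3-sets of type `VVW` or `VWW`) contains a
matching of size `d`, and its minimum vertex degree equals `C(n-1,2) - C(n-d-1,2)`. -/
theorem stmt_4 (n d : ℕ) (hd : 3 * d ≤ n) (Vt : Type) [Fintype Vt] [DecidableEq Vt]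
    (hcard : Fintype.card Vt = n)
    (V W : Finset Vt) (hdisj : Disjoint V W) (hunion : V ∪ W = Finset.univ)
    (hW : W.card = d)
    (H : Finset (Finset Vt))
    (hH : ∀ e : Finset Vt, e ∈ H ↔ e.card = 3 ∧ ((e ∩ W).card = 1 ∨ (e ∩ W).card = 2)) :
    (∃ M ⊆ H, (M : Set (Finset Vt)).PairwiseDisjoint id ∧ M.card = d) ∧
    sInf (Set.range fun v : Vt => (H.filter fun e => v ∈ e).card)
      = Nat.choose (n - 1) 2 - Nat.choose (n - d - 1) 2 := by
  have hVW : V.card + W.card = n := by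
    rw [← Finset.card_union_of_disjoint hdisj, hunion, Finset.card_univ, hcard]
  have hVcard : V.card = n - d := by omega
  constructor
  · -- matching of size d
    obtain ⟨M, hMcard, hMdisj, hMe⟩ := matching_aux d W V hW hdisj (by omega)
    refine ⟨M, ?_, hMdisj, hMcard⟩
    intro e he
    obtain ⟨w, hwW, v1, hv1, v2, hv2, hne, rfl⟩ := hMe e he
    have hwv1 : w ≠ v1 := fun h => Finset.disjoint_left.mp hdisj hv1 (h ▸ hwW)
    have hwv2 : w ≠ v2 := fun h => Finset.disjoint_left.mp hdisj hv2 (h ▸ hwW)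
    have hv1W : v1 ∉ W := fun h => Finset.disjoint_left.mp hdisj hv1 h
    have hv2W : v2 ∉ W := fun h => Finset.disjoint_left.mp hdisj hv2 h
    rw [hH]
    constructor
    · rw [Finset.card_insert_of_notMem (by simp [hwv1, hwv2]),
        Finset.card_insert_of_notMem (by simp [hne]), Finset.card_singleton]
    · left
      have : ({w, v1, v2} : Finset Vt) ∩ W = {w} := by
        ext x
        simp only [Finset.mem_inter, Finset.mem_insert, Finset.mem_singleton]
        constructor
        · rintro ⟨rfl | rfl | rfl, hxW⟩
          · rfl
          · exact absurd hxW hv1W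
          · exact absurd hxW hv2W
        · rintro rfl; exact ⟨Or.inl rfl, hwW⟩
      rw [this, Finset.card_singleton]
  · -- degree computation
    have hdeg : ∀ v : Vt, (H.filter fun e => v ∈ e).card =
        (((Finset.univ.erase v).powersetCard 2).filter fun p =>
          ((insert v p) ∩ W).card = 1 ∨ ((insert v p) ∩ W).card = 2).card := by
      intro v
      refine Finset.card_bij' (fun e _ => e.erase v) (fun p _ => insert v p) ?_ ?_ ?_ ?_
      · intro e he
        rw [Finset.mem_filter] at he
        obtain ⟨heH, hve⟩ := he
        rw [hH] at heH
        rw [Finset.mem_filter, Finset.mem_powersetCard]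
        have hins : insert v (e.erase v) = e := Finset.insert_erase hve
        refine ⟨⟨Finset.erase_subset_erase v (Finset.subset_univ e), ?_⟩, ?_⟩
        · rw [Finset.card_erase_of_mem hve, heH.1]
        · rw [hins]; exact heH.2
      · intro p hp
        rw [Finset.mem_filter, Finset.mem_powersetCard] at hp
        obtain ⟨⟨hpsub, hpcard⟩, hpcond⟩ := hp
        have hvp : v ∉ p := fun h => (Finset.mem_erase.mp (hpsub h)).1 rfl
        rw [Finset.mem_filter, hH]
        exact ⟨⟨by rw [Finset.card_insert_of_notMem hvp, hpcard], hpcond⟩,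
          Finset.mem_insert_self v p⟩
      · intro e he
        rw [Finset.mem_filter] at he
        exact Finset.insert_erase he.2
      · intro p hp
        rw [Finset.mem_filter, Finset.mem_powersetCard] at hp
        have hvp : v ∉ p := fun h => (Finset.mem_erase.mp (hp.1.1 h)).1 rfl
        exact Finset.erase_insert hvp
    have hErase : ∀ v : Vt, (Finset.univ.erase v).card = n - 1 := by
      intro v
      rw [Finset.card_erase_of_mem (Finset.mem_univ v), Finset.card_univ, hcard]
    -- degree of a vertex in V
    have hdegV : ∀ v ∈ V, (H.filter fun e => v ∈ e).card
        = Nat.choose (n - 1) 2 - Nat.choose (n - d - 1) 2 := by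
      intro v hv
      have hvW : v ∉ W := fun h => Finset.disjoint_left.mp hdisj hv h
      rw [hdeg v]
      set S := (Finset.univ.erase v).powersetCard 2 with hS
      have hcond : ∀ p ∈ S, (((insert v p) ∩ W).card = 1 ∨ ((insert v p) ∩ W).card = 2)
          ↔ ¬ (p ∩ W = ∅) := by
        intro p hp
        rw [hS, Finset.mem_powersetCard] at hp
        rw [Finset.insert_inter_of_notMem hvW]
        have h2 : (p ∩ W).card ≤ 2 := le_trans (Finset.card_le_card Finset.inter_subset_left)
          (le_of_eq hp.2)
        constructor
        · intro h hc
          rw [hc] at h; simp at h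
        · intro h
          have : (p ∩ W).card ≠ 0 := fun h0 => h (Finset.card_eq_zero.mp h0)
          omega
      rw [Finset.filter_congr hcond]
      have hsplit := Finset.card_filter_add_card_filter_not
        (s := S) (p := fun p => ¬ (p ∩ W = ∅))
      have hScard : S.card = Nat.choose (n - 1) 2 := by
        rw [hS, Finset.card_powersetCard, hErase v]
      have hcompl : S.filter (fun p => ¬ ¬ (p ∩ W = ∅)) = (V.erase v).powersetCard 2 := by
        ext p
        simp only [Finset.mem_filter, hS, Finset.mem_powersetCard, not_not]
        constructor
        · rintro ⟨⟨hsub, hc⟩, hempty⟩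
          refine ⟨?_, hc⟩
          intro x hx
          have hxu := hsub hx
          rw [Finset.mem_erase] at hxu
          rw [Finset.mem_erase]
          refine ⟨hxu.1, ?_⟩
          have hxW : x ∉ W := fun hxW => by
            have : x ∈ p ∩ W := Finset.mem_inter.mpr ⟨hx, hxW⟩
            rw [hempty] at this; exact absurd this (Finset.notMem_empty x)
          have : x ∈ V ∪ W := hunion ▸ Finset.mem_univ x
          rcases Finset.mem_union.mp this with h | h
          · exact h
          · exact absurd h hxW
        · rintro ⟨hsub, hc⟩
          refine ⟨⟨fun x hx => ?_, hc⟩, ?_⟩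
          · have := hsub hx
            rw [Finset.mem_erase] at this ⊢
            exact ⟨this.1, Finset.mem_univ x⟩
          · rw [Finset.eq_empty_iff_forall_notMem]
            intro x hx
            rw [Finset.mem_inter] at hx
            have : x ∈ V := Finset.mem_of_mem_erase (hsub hx.1)
            exact Finset.disjoint_left.mp hdisj this hx.2
      have hcomplcard : (S.filter (fun p => ¬ ¬ (p ∩ W = ∅))).card
          = Nat.choose (n - d - 1) 2 := by
        rw [hcompl, Finset.card_powersetCard, Finset.card_erase_of_mem hv, hVcard]
      omega
    -- degree of a vertex in W
    have hdegW : ∀ w ∈ W, (H.filter fun e => w ∈ e).card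
        = Nat.choose (n - 1) 2 - Nat.choose (d - 1) 2 := by
      intro w hw
      rw [hdeg w]
      set S := (Finset.univ.erase w).powersetCard 2 with hS
      have hcond : ∀ p ∈ S, (((insert w p) ∩ W).card = 1 ∨ ((insert w p) ∩ W).card = 2)
          ↔ ¬ (p ∩ W).card = 2 := by
        intro p hp
        rw [hS, Finset.mem_powersetCard] at hp
        have hwp : w ∉ p := fun h => (Finset.mem_erase.mp (hp.1 h)).1 rfl
        have hwpW : w ∉ p ∩ W := fun h => hwp (Finset.mem_inter.mp h).1
        have hins : (insert w p) ∩ W = insert w (p ∩ W) := by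
          rw [Finset.insert_inter_of_mem hw]
        rw [hins, Finset.card_insert_of_notMem hwpW]
        have h2 : (p ∩ W).card ≤ 2 := le_trans (Finset.card_le_card Finset.inter_subset_left)
          (le_of_eq hp.2)
        omega
      rw [Finset.filter_congr hcond]
      have hsplit := Finset.card_filter_add_card_filter_not
        (s := S) (p := fun p => ¬ (p ∩ W).card = 2)
      have hScard : S.card = Nat.choose (n - 1) 2 := by
        rw [hS, Finset.card_powersetCard, hErase w]
      have hcompl : S.filter (fun p => ¬ ¬ (p ∩ W).card = 2) = (W.erase w).powersetCard 2 := by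
        ext p
        simp only [Finset.mem_filter, hS, Finset.mem_powersetCard, not_not]
        constructor
        · rintro ⟨⟨hsub, hc⟩, hcard2⟩
          have hpe : p ∩ W = p := Finset.eq_of_subset_of_card_le Finset.inter_subset_left
            (by rw [hc, hcard2])
          have hpW : p ⊆ W := by
            intro x hx
            rw [← hpe] at hx
            exact (Finset.mem_inter.mp hx).2
          refine ⟨fun x hx => Finset.mem_erase.mpr
            ⟨(Finset.mem_erase.mp (hsub hx)).1, hpW hx⟩, hc⟩
        · rintro ⟨hsub, hc⟩
          have hpW : p ⊆ W := fun x hx => Finset.mem_of_mem_erase (hsub hx)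
          have hpiW : p ∩ W = p := Finset.inter_eq_left.mpr hpW
          refine ⟨⟨fun x hx => ?_, hc⟩, by rw [hpiW, hc]⟩
          exact Finset.mem_erase.mpr ⟨(Finset.mem_erase.mp (hsub hx)).1, Finset.mem_univ x⟩
      have hcomplcard : (S.filter (fun p => ¬ ¬ (p ∩ W).card = 2)).card
          = Nat.choose (d - 1) 2 := by
        rw [hcompl, Finset.card_powersetCard, Finset.card_erase_of_mem hw, hW]
      omega
    -- conclude
    by_cases hn : n = 0
    · subst hn
      have hd0 : d = 0 := by omega
      have : IsEmpty Vt := Fintype.card_eq_zero_iff.mp hcard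
      rw [Set.range_eq_empty, Nat.sInf_empty]
      simp [hd0]
    · have hdn : d < n := by omega
      have hVne : V.Nonempty := Finset.card_pos.mp (by omega)
      obtain ⟨v0, hv0⟩ := hVne
      have hne : Nonempty Vt := ⟨v0⟩
      apply le_antisymm
      · exact Nat.sInf_le ⟨v0, hdegV v0 hv0⟩
      · apply le_csInf (Set.range_nonempty _)
        rintro b ⟨v, rfl⟩
        have : v ∈ V ∪ W := hunion ▸ Finset.mem_univ v
        rcases Finset.mem_union.mp this with h | h
        · exact (hdegV v h).ge
        · refine le_trans ?_ (hdegW v h).ge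
          exact Nat.sub_le_sub_left (Nat.choose_le_choose 2 (by omega)) _
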